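/- Let G be a finite insoluble group with R(G) = 1. Then |E(Γ_S(G))| ≥ (|G|/2)·(k(G) - 3) + 1, where k(G) is the number of conjugacy classes of G; equality never holds (since G is insoluble, hence not abelian). -/

import Mathlib

open Subgroup

/-- The soluble radical of a group: the join of all soluble normal subgroups. -/
def solRadical (G : Type*) [Group G] : Subgroup G :=
  sSup {N : Subgroup G | N.Normal ∧ IsSolvable N}

instance solRadical_normal {G : Type*} [Group G] : (solRadical G).Normal := by
  constructor
  intro n hn g
  have h : solRadical G ≤ (solRadical G).comap (MulAut.conj g).toMonoidHom := by
    apply sSup_le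
    rintro N ⟨hnorm, hsol⟩ x hx
    simp only [Subgroup.mem_comap, MulEquiv.coe_toMonoidHom, MulAut.conj_apply]
    exact le_sSup (s := {N : Subgroup G | N.Normal ∧ IsSolvable N}) ⟨hnorm, hsol⟩
      (hnorm.conj_mem x hx g)
  simpa using h hn

/-- The solubilizer of an element `x`: all `g` such that `⟨x, g⟩` is soluble. -/
def solubilizer {G : Type*} [Group G] (x : G) : Set G :=
  {g : G | IsSolvable (Subgroup.closure ({x, g} : Set G))}

/-- The solubility graph: vertices are elements outside the soluble radical,
two distinct vertices adjacent iff they generate a soluble subgroup. -/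
def solGraph (G : Type*) [Group G] : SimpleGraph {x : G // x ∉ solRadical G} where
  Adj a b := a ≠ b ∧ IsSolvable (Subgroup.closure ({a.1, b.1} : Set G))
  symm := ⟨(by rintro a b ⟨hne, hs⟩; exact ⟨hne.symm, by rwa [Set.pair_comm]⟩)⟩
  loopless := ⟨(by rintro a ⟨h, -⟩; exact h rfl)⟩

noncomputable instance {G : Type*} [Group G] [Fintype G] :
    Fintype {x : G // x ∉ solRadical G} := Fintype.ofFinite _

/-- The degree of `x` in the solubility graph (as the number of its neighbours). -/
noncomputable def solDeg (G : Type*) [Group G] (x : G) : ℕ :=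
  {g : G | g ∉ solRadical G ∧ g ≠ x ∧
    IsSolvable (Subgroup.closure ({x, g} : Set G))}.ncard

/-- The number of edges of the solubility graph. -/
noncomputable def solEdges (G : Type*) [Group G] : ℕ :=
  (solGraph G).edgeSet.ncard

/-- The solubility degree of a finite group. -/
noncomputable def Ps (G : Type*) [Group G] : ℚ :=
  (Nat.card {p : G × G // IsSolvable (Subgroup.closure ({p.1, p.2} : Set G))} : ℚ) /
    (Nat.card G : ℚ) ^ 2


/-!
Count ordered pairs `(x, y)` generating a soluble subgroup. When `R(G) = 1` the pairs with
`x = y`, `x = 1` or `y = 1` are `3|G| - 2` in number and all the others are the darts of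
`Γ_S(G)`, so `2|E| = |G|² P_s(G) + 2 - 3|G|`. The `k(G)|G|` commuting pairs are soluble, and an
insoluble group also has a soluble non-commuting pair, so `|G|² P_s(G) > k(G)|G|`.
Such a pair comes from Burnside's normal `p`-complement theorem: for a Sylow `p`-subgroup `P`,
either some `y ∈ N(P)` fails to commute with some `x ∈ P`, and then `⟨x, y⟩` is
`p`-group-by-cyclic, or `P` has a normal complement, a smaller insoluble group.
-/

section Solubility

variable {G : Type*} [Group G]

open scoped IsMulCommutative in
theorem isSolvable_closure_pair_of_commute {x y : G} (h : Commute x y) :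
    Group.IsSolvable (closure ({x, y} : Set G)) := by
  have : IsMulCommutative (closure ({x, y} : Set G)) := isMulCommutative_closure <| by
    rintro a (rfl | rfl) b (rfl | rfl)
    exacts [rfl, h, h.symm, rfl]
  infer_instance

theorem isSolvable_closure_pair_map {G' : Type*} [Group G'] (f : G →* G')
    (hf : Function.Injective f) {x y : G} (h : Group.IsSolvable (closure ({x, y} : Set G))) :
    Group.IsSolvable (closure ({f x, f y} : Set G')) := by
  rw [← Set.image_pair, ← MonoidHom.map_closure]
  let e := equivMapOfInjective (closure ({x, y} : Set G)) f hf
  exact Group.isSolvable_of_surjective (f := e.toMonoidHom) e.surjective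

theorem isSolvable_of_isSolvable_ker_of_isSolvable_map {G' : Type*} [Group G'] (f : G →* G')
    [Group.IsSolvable f.ker] (H : Subgroup G) [Group.IsSolvable (H.map f)] :
    Group.IsSolvable H := by
  have : Group.IsSolvable (f.domRestrict H).range := by rwa [MonoidHom.domRestrict_range]
  have : Group.IsSolvable (f.ker.subgroupOf H) :=
    Group.isSolvable_of_isSolvable_injective (f := H.subtype.subgroupComap f.ker)
      fun _ _ h ↦ Subtype.ext <| Subtype.ext (congrArg Subtype.val h :)
  exact Group.isSolvable_of_ker_le_range (f.ker.subgroupOf H).subtype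
    (f.domRestrict H).rangeRestrict (by simp)

theorem isSolvable_closure_pair_of_mem_normalizer {P : Subgroup G} [Group.IsSolvable P]
    {x y : G} (hx : x ∈ P) (hy : y ∈ normalizer (P : Set G)) :
    Group.IsSolvable (closure ({x, y} : Set G)) := by
  set N := normalizer (P : Set G)
  let π := QuotientGroup.mk' (P.subgroupOf N)
  have : Group.IsSolvable π.ker := by
    rw [QuotientGroup.ker_mk']
    let e := subgroupOfEquivOfLe (le_normalizer : P ≤ N)
    exact Group.isSolvable_of_surjective (f := e.symm.toMonoidHom) e.symm.surjective
  let x' : N := ⟨x, le_normalizer hx⟩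
  let y' : N := ⟨y, hy⟩
  have : Group.IsSolvable ((closure {x', y'}).map π) := by
    have hπx : π x' = 1 := (QuotientGroup.eq_one_iff x').2 hx
    rw [MonoidHom.map_closure, Set.image_pair, hπx]
    exact isSolvable_closure_pair_of_commute (Commute.one_left _)
  exact isSolvable_closure_pair_map (x := x') (y := y') N.subtype N.subtype_injective
    (isSolvable_of_isSolvable_ker_of_isSolvable_map π _)

theorem exists_not_commute_isSolvable_closure_pair [Finite G] (hG : ¬ Group.IsSolvable G) :
    ∃ x y : G, ¬ Commute x y ∧ Group.IsSolvable (closure ({x, y} : Set G)) := by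
  induction hn : Nat.card G using Nat.strong_induction_on generalizing G with
  | _ n ih =>
  have hG1 : Nat.card G ≠ 1 := fun h ↦ hG <|
    have := (Nat.card_eq_one_iff_unique.mp h).1
    inferInstance
  obtain ⟨p, hp, hpG⟩ := Nat.exists_prime_and_dvd hG1
  have := Fact.mk hp
  obtain ⟨P⟩ : Nonempty (Sylow p G) := inferInstance
  have : Group.IsNilpotent P := P.isPGroup'.isNilpotent
  by_cases hNC : normalizer (P : Set G) ≤ centralizer (P : Set G)
  · set K := (MonoidHom.transferSylow P hNC).ker
    have hK : ¬ Group.IsSolvable K := fun _ ↦ hG <|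
      Group.isSolvable_of_ker_le_range K.subtype (MonoidHom.transferSylow P hNC)
        K.range_subtype.ge
    have hKtop : K ≠ ⊤ := fun h ↦ P.ne_bot_of_dvd_card hpG <|
      isComplement'_top_left.mp (h ▸ MonoidHom.ker_transferSylow_isComplement' P hNC)
    have hKG : Nat.card K < n :=
      hn ▸ lt_of_le_of_ne K.card_le_card_group (mt (card_eq_iff_eq_top K).mp hKtop)
    obtain ⟨x, y, hxy, hsol⟩ := ih _ hKG hK rfl
    exact ⟨x, y, fun h ↦ hxy (Subtype.ext h),
      isSolvable_closure_pair_map K.subtype K.subtype_injective hsol⟩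
  · obtain ⟨y, hyN, hyC⟩ := SetLike.not_le_iff_exists.mp hNC
    obtain ⟨x, hxP, hxy⟩ : ∃ x ∈ P, ¬ Commute x y := by
      simpa [mem_centralizer_iff, Commute, SemiconjBy] using hyC
    exact ⟨x, y, hxy, isSolvable_closure_pair_of_mem_normalizer hxP hyN⟩

end Solubility

theorem ncard_compl_offDiag_compl_singleton_add_two {α : Type*} [Finite α] (a : α) :
    (({a}ᶜ : Set α).offDiag)ᶜ.ncard + 2 = 3 * Nat.card α := by
  classical
  have := Fintype.ofFinite α
  have : Nonempty α := ⟨a⟩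
  have hcompl : ({a}ᶜ : Set α).ncard = Nat.card α - 1 := by
    rw [Set.ncard_compl, Set.ncard_singleton]
  have hoff : ({a}ᶜ : Set α).offDiag.ncard =
      (Nat.card α - 1) * (Nat.card α - 1) - (Nat.card α - 1) := by
    rw [Set.ncard_eq_toFinset_card', Set.toFinset_offDiag, Finset.offDiag_card, ← hcompl,
      Set.ncard_eq_toFinset_card']
  rw [Set.ncard_compl, Nat.card_prod, hoff]
  obtain ⟨n, hn⟩ : ∃ n, Nat.card α = n + 1 := Nat.exists_eq_add_one.mpr Nat.card_pos
  rw [hn, Nat.add_sub_cancel]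
  have : n ≤ n * n := Nat.le_mul_self n
  have : n * n - n ≤ (n + 1) * (n + 1) := by nlinarith [Nat.sub_le (n * n) n]
  zify [*]
  ring

section SolubilityDegree

variable {G : Type*} [Group G]

theorem ncard_isSolvable_inter_offDiag_eq_two_mul_solEdges [Finite G] :
    ({p : G × G | Group.IsSolvable (closure ({p.1, p.2} : Set G))} ∩
      ((solRadical G : Set G)ᶜ).offDiag).ncard = 2 * solEdges G := by
  classical
  have := Fintype.ofFinite G
  let toPair : (solGraph G).Dart → G × G := fun d ↦ (d.fst.1, d.snd.1)
  have hinj : Function.Injective toPair := fun d d' h ↦ by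
    simp only [toPair, Prod.ext_iff] at h
    exact SimpleGraph.Dart.ext _ _ (Prod.ext (Subtype.ext h.1) (Subtype.ext h.2))
  have hrange : Set.range toPair =
      {p : G × G | Group.IsSolvable (closure ({p.1, p.2} : Set G))} ∩
        ((solRadical G : Set G)ᶜ).offDiag := by
    ext ⟨x, y⟩
    constructor
    · rintro ⟨⟨⟨u, v⟩, hne, hsol⟩, h⟩
      simp only [toPair, Prod.mk.injEq] at h
      obtain ⟨rfl, rfl⟩ := h
      exact ⟨hsol, u.2, v.2, fun h ↦ hne (Subtype.ext h)⟩
    · rintro ⟨hsol, hx, hy, hne⟩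
      exact ⟨⟨(⟨x, hx⟩, ⟨y, hy⟩), fun h ↦ hne (congrArg Subtype.val h), hsol⟩, rfl⟩
  rw [← hrange, Set.ncard_range_of_injective hinj, Nat.card_eq_fintype_card,
    SimpleGraph.dart_card_eq_twice_card_edges, solEdges, SimpleGraph.edgeFinset,
    Set.ncard_eq_toFinset_card']

theorem two_mul_solEdges_eq [Finite G] (hR : solRadical G = ⊥) :
    (2 * solEdges G : ℚ) = Nat.card G ^ 2 * Ps G + 2 - 3 * Nat.card G := by
  set S := {p : G × G | Group.IsSolvable (closure ({p.1, p.2} : Set G))}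
  set O := ((solRadical G : Set G)ᶜ).offDiag
  have hO : O = ({1}ᶜ : Set G).offDiag := by simp only [O, hR, coe_bot]
  have hOS : Oᶜ ⊆ S := by
    intro p hp
    simp only [hO, Set.mem_compl_iff, Set.mem_offDiag, Set.mem_singleton_iff, not_and_or,
      not_not] at hp
    apply isSolvable_closure_pair_of_commute
    rcases hp with h | h | h
    · exact h ▸ Commute.one_left _
    · exact h ▸ Commute.one_right _
    · exact h ▸ Commute.refl _
  have hS : S = (S ∩ O) ∪ Oᶜ := by rw [← Set.inter_eq_right.mpr hOS, Set.inter_union_compl]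
  have hcard : Nat.card S + 2 = 2 * solEdges G + 3 * Nat.card G := by
    rw [Nat.card_coe_set_eq, hS,
      Set.ncard_union_eq ((disjoint_compl_right (a := O)).mono_left Set.inter_subset_right),
      ncard_isSolvable_inter_offDiag_eq_two_mul_solEdges, hO, add_assoc,
      ncard_compl_offDiag_compl_singleton_add_two]
  have hn : (Nat.card G : ℚ) ≠ 0 := by exact_mod_cast Nat.card_pos.ne'
  rw [Ps, mul_div_cancel₀ _ (pow_ne_zero 2 hn)]
  change _ = (Nat.card S : ℚ) + 2 - 3 * Nat.card G
  have := congrArg (Nat.cast : ℕ → ℚ) hcard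
  push_cast at this
  linarith

theorem card_conjClasses_div_card_lt_Ps [Finite G] (hG : ¬ Group.IsSolvable G) :
    (Nat.card (ConjClasses G) : ℚ) / Nat.card G < Ps G := by
  obtain ⟨x, y, hxy, hsol⟩ := exists_not_commute_isSolvable_closure_pair hG
  have hlt : Nat.card {p : G × G // Commute p.1 p.2} <
      Nat.card {p : G × G // Group.IsSolvable (closure ({p.1, p.2} : Set G))} :=
    Set.Finite.card_lt_card (Set.toFinite _) <| Set.ssubset_iff_of_subset
      (fun p hp ↦ isSolvable_closure_pair_of_commute hp) |>.mpr ⟨(x, y), hsol, hxy⟩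
  rw [card_comm_eq_card_conjClasses_mul_card] at hlt
  have hn : (0 : ℚ) < Nat.card G := by exact_mod_cast Nat.card_pos
  rw [Ps, div_lt_div_iff₀ hn (by positivity)]
  calc (Nat.card (ConjClasses G) : ℚ) * Nat.card G ^ 2
      = (Nat.card (ConjClasses G) * Nat.card G : ℕ) * Nat.card G := by push_cast; ring
    _ < _ := by gcongr; exact hlt

end SolubilityDegree

theorem stmt13 {G : Type*} [Group G] [Fintype G] (hG : ¬ IsSolvable G)
    (hR : solRadical G = ⊥) :
    (solEdges G : ℚ) >
      (Nat.card G : ℚ) / 2 * ((Nat.card (ConjClasses G) : ℚ) - 3) + 1 := by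
  have hn : (0 : ℚ) < Nat.card G := by exact_mod_cast Nat.card_pos
  have hPs := card_conjClasses_div_card_lt_Ps hG
  rw [div_lt_iff₀ hn] at hPs
  have hE := two_mul_solEdges_eq hR
  have hkn : (Nat.card G : ℚ) * Nat.card (ConjClasses G) < Nat.card G ^ 2 * Ps G := by
    have := mul_lt_mul_of_pos_left hPs hn
    linarith
  linarith
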